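/- Let 0 < δ < 1/2, 0 < η < 1/2, and let t be an integer with 1 ≤ t, t+1 ≤ δn, such that 1/2 + (1−2p)^{t+1}/2 ≤ 2^{−(1−η)}. Let E_up be the event that for every set S of left vertices with t+1 ≤ #S ≤ δn, there exists a right vertex b_j with #(R_j ∩ S) odd. Then μ(E_up^c) ≤ (Σ_{g=t+1}^{⌊δn⌋} C(n,g)) · 2^{−(1−η)m}. -/

import Mathlib

/-- Weight of a binary matrix under i.i.d. Bernoulli(p) entries: entry `1` has
probability `p`, entry `0` has probability `1 - p`. -/
noncomputable def matWeight (m n : ℕ) (p : ℝ) (X : Matrix (Fin m) (Fin n) (ZMod 2)) : ℝ :=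
  ∏ j : Fin m, ∏ i : Fin n, if X j i = 1 then p else 1 - p

/-- The probability measure `μ` on `m × n` binary matrices with i.i.d. Bernoulli(p)
entries, evaluated on an event `E`. -/
noncomputable def matProb (m n : ℕ) (p : ℝ) (E : Set (Matrix (Fin m) (Fin n) (ZMod 2))) : ℝ :=
  ∑ X : Matrix (Fin m) (Fin n) (ZMod 2), E.indicator (matWeight m n p) X

/-- `R_j`, the set of left neighbours of the right vertex `b_j`. -/
def rightNbrs {m n : ℕ} (X : Matrix (Fin m) (Fin n) (ZMod 2)) (j : Fin m) : Finset (Fin n) :=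
  Finset.univ.filter fun i => X j i = 1

/-! For a fixed set `S` of left vertices, the rows of `X` are independent, and a single row meets
`S` in an even number of vertices with probability `(1 + (1 - 2p)^#S) / 2`: the expectation of
the sign `(-1)^#(R ∩ S)` factors over the entries, each entry in `S` contributing `1 - 2p`. Hence
all `m` rows meet `S` evenly with probability `((1 + (1 - 2p)^#S) / 2)^m ≤ 2^(-(1-η)m)` once
`#S ≥ t + 1`, and a union bound over the admissible sets `S`, grouped by size, gives the claim. -/

open Finset

lemma sum_zmod_two {M : Type*} [AddCommMonoid M] (f : ZMod 2 → M) : ∑ b, f b = f 0 + f 1 :=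
  Fin.sum_univ_two f

section Bernoulli

variable {ι : Type*} [Fintype ι] [DecidableEq ι]

noncomputable def bernoulliWeight (p : ℝ) (v : ι → ZMod 2) : ℝ :=
  ∏ i, if v i = 1 then p else 1 - p

theorem sum_neg_one_pow_card_mul_bernoulliWeight (p : ℝ) (S : Finset ι) :
    ∑ v : ι → ZMod 2, (-1 : ℝ) ^ #{i ∈ S | v i = 1} * bernoulliWeight p v = (1 - 2 * p) ^ #S := by
  have hsign : ∀ v : ι → ZMod 2,
      (-1 : ℝ) ^ #{i ∈ S | v i = 1} = ∏ i, if i ∈ S ∧ v i = 1 then -1 else 1 := by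
    intro v
    rw [← prod_const, prod_filter, ← Fintype.prod_ite_mem]
    exact prod_congr rfl fun i _ => by split_ifs <;> simp_all
  have hfactor : ∀ i : ι, ∑ b : ZMod 2,
      (if i ∈ S ∧ b = 1 then -1 else 1) * (if b = 1 then p else 1 - p) =
        if i ∈ S then 1 - 2 * p else 1 := by
    intro i
    by_cases hi : i ∈ S
    · simp [sum_zmod_two, hi]; ring
    · simp [sum_zmod_two, hi]
  simp_rw [hsign, bernoulliWeight, ← prod_mul_distrib]
  rw [← Fintype.prod_sum fun i (b : ZMod 2) =>
      (if i ∈ S ∧ b = 1 then (-1 : ℝ) else 1) * (if b = 1 then p else 1 - p),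
    prod_congr rfl fun i _ => hfactor i, Fintype.prod_ite_mem, prod_const]

theorem sum_bernoulliWeight (p : ℝ) : ∑ v : ι → ZMod 2, bernoulliWeight p v = 1 := by
  simpa using sum_neg_one_pow_card_mul_bernoulliWeight p (∅ : Finset ι)

theorem sum_indicator_even_bernoulliWeight (p : ℝ) (S : Finset ι) :
    ∑ v : ι → ZMod 2, {v | Even #{i ∈ S | v i = 1}}.indicator (bernoulliWeight p) v =
      (1 + (1 - 2 * p) ^ #S) / 2 := by
  have hparity : ∀ v : ι → ZMod 2,
      {v | Even #{i ∈ S | v i = 1}}.indicator (bernoulliWeight p) v =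
        (bernoulliWeight p v + (-1) ^ #{i ∈ S | v i = 1} * bernoulliWeight p v) / 2 := by
    intro v
    rcases Nat.even_or_odd #{i ∈ S | v i = 1} with h | h
    · simp [h, h.neg_one_pow]
    · simp [Nat.not_even_iff_odd.mpr h, h.neg_one_pow]
  rw [sum_congr rfl fun v _ => hparity v, ← sum_div, sum_add_distrib, sum_bernoulliWeight,
    sum_neg_one_pow_card_mul_bernoulliWeight]

end Bernoulli

theorem matWeight_nonneg {m n : ℕ} {p : ℝ} (hp0 : 0 ≤ p) (hp1 : p ≤ 1)
    (X : Matrix (Fin m) (Fin n) (ZMod 2)) : 0 ≤ matWeight m n p X :=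
  prod_nonneg fun _ _ => prod_nonneg fun _ _ => by split_ifs <;> linarith

theorem matProb_le_sum_of_subset_biUnion {m n : ℕ} {p : ℝ} (hp0 : 0 ≤ p) (hp1 : p ≤ 1)
    {κ : Type*} {s : Finset κ} {E : Set (Matrix (Fin m) (Fin n) (ZMod 2))}
    {F : κ → Set (Matrix (Fin m) (Fin n) (ZMod 2))} (hE : E ⊆ ⋃ k ∈ s, F k) :
    matProb m n p E ≤ ∑ k ∈ s, matProb m n p (F k) := by
  unfold matProb
  rw [sum_comm]
  refine sum_le_sum fun X _ => ?_
  have hterm : ∀ k, 0 ≤ (F k).indicator (matWeight m n p) X :=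
    fun k => Set.indicator_nonneg (fun Y _ => matWeight_nonneg hp0 hp1 Y) X
  by_cases hX : X ∈ E
  · obtain ⟨k, hk, hXk⟩ := Set.mem_iUnion₂.mp (hE hX)
    rw [Set.indicator_of_mem hX, ← Set.indicator_of_mem hXk (matWeight m n p)]
    exact single_le_sum (fun k _ => hterm k) hk
  · rw [Set.indicator_of_notMem hX]
    exact sum_nonneg fun k _ => hterm k

theorem matProb_forall_row_mem (m n : ℕ) (p : ℝ) (A : Set (Fin n → ZMod 2)) :
    matProb m n p {X | ∀ j, X j ∈ A} = (∑ v, A.indicator (bernoulliWeight p) v) ^ m := by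
  rw [← Fin.prod_const, Fintype.prod_sum]
  refine Fintype.sum_equiv (Matrix.of (m := Fin m) (n := Fin n) (α := ZMod 2)).symm _ _
    fun X => ?_
  classical
  simp only [Set.indicator_apply, Fintype.prod_ite_zero]
  congr 1

def allRowsEvenOn (m : ℕ) {n : ℕ} (S : Finset (Fin n)) : Set (Matrix (Fin m) (Fin n) (ZMod 2)) :=
  {X | ∀ j, Even #(rightNbrs X j ∩ S)}

theorem matProb_allRowsEvenOn (m n : ℕ) (p : ℝ) (S : Finset (Fin n)) :
    matProb m n p (allRowsEvenOn m S) = ((1 + (1 - 2 * p) ^ #S) / 2) ^ m := by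
  have hrows : allRowsEvenOn m S = {X | ∀ j, X j ∈ {v | Even #{i ∈ S | v i = 1}}} := by
    ext X
    simp only [allRowsEvenOn, rightNbrs, filter_inter, univ_inter]
    rfl
  rw [hrows, matProb_forall_row_mem, sum_indicator_even_bernoulliWeight]

theorem matProb_allRowsEvenOn_le {m n k : ℕ} {p : ℝ} (hp0 : 0 ≤ p) (hp : p ≤ 1 / 2)
    {S : Finset (Fin n)} (hk : k ≤ #S) {b : ℝ} (hb : (1 + (1 - 2 * p) ^ k) / 2 ≤ b) :
    matProb m n p (allRowsEvenOn m S) ≤ b ^ m := by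
  have h2p : 0 ≤ 1 - 2 * p := by linarith
  have hdecay : (1 - 2 * p) ^ #S ≤ (1 - 2 * p) ^ k := pow_le_pow_of_le_one h2p (by linarith) hk
  rw [matProb_allRowsEvenOn]
  exact pow_le_pow_left₀ (by linarith [pow_nonneg h2p #S]) (by linarith) m

theorem E_up_complement_prob_general (m n t : ℕ)
    (p δ η : ℝ) (hp0 : 0 < p) (hp1 : p < 1 / 2)
    (hodd : 1 / 2 + (1 - 2 * p) ^ (t + 1) / 2 ≤ (2 : ℝ) ^ (-(1 - η))) :
    matProb m n p
        {X | ∀ S : Finset (Fin n), t + 1 ≤ S.card → (S.card : ℝ) ≤ δ * n →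
          ∃ j : Fin m, Odd ((rightNbrs X j) ∩ S).card}ᶜ
      ≤ (∑ g ∈ Finset.Icc (t + 1) ⌊δ * n⌋₊, (n.choose g : ℝ)) *
          (2 : ℝ) ^ (-(1 - η) * m) := by
  have hp_le_one : p ≤ 1 := by linarith
  have hcover : {X | ∀ S : Finset (Fin n), t + 1 ≤ S.card → (S.card : ℝ) ≤ δ * n →
      ∃ j : Fin m, Odd ((rightNbrs X j) ∩ S).card}ᶜ ⊆
        ⋃ g ∈ Icc (t + 1) ⌊δ * n⌋₊, ⋃ S ∈ powersetCard g univ, allRowsEvenOn m S := by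
    intro X hX
    simp only [Set.mem_compl_iff, Set.mem_ofPred_eq, not_forall, not_exists,
      Nat.not_odd_iff_even] at hX
    obtain ⟨S, hlow, hhigh, heven⟩ := hX
    simp only [Set.mem_iUnion, mem_Icc, mem_powersetCard_univ]
    exact ⟨#S, ⟨hlow, Nat.le_floor hhigh⟩, S, rfl, heven⟩
  have hbad : ∀ S : Finset (Fin n), t + 1 ≤ #S →
      matProb m n p (allRowsEvenOn m S) ≤ (2 : ℝ) ^ (-(1 - η) * m) := fun S hS =>
    calc matProb m n p (allRowsEvenOn m S) ≤ ((2 : ℝ) ^ (-(1 - η))) ^ m :=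
          matProb_allRowsEvenOn_le hp0.le hp1.le hS (by linarith)
      _ = (2 : ℝ) ^ (-(1 - η) * m) := by rw [Real.rpow_mul zero_le_two, Real.rpow_natCast]
  calc _ ≤ ∑ g ∈ Icc (t + 1) ⌊δ * n⌋₊,
        matProb m n p (⋃ S ∈ powersetCard g univ, allRowsEvenOn m S) :=
        matProb_le_sum_of_subset_biUnion hp0.le hp_le_one hcover
    _ ≤ ∑ g ∈ Icc (t + 1) ⌊δ * n⌋₊, ∑ S ∈ powersetCard g univ,
          matProb m n p (allRowsEvenOn m S) :=
        sum_le_sum fun g _ => matProb_le_sum_of_subset_biUnion hp0.le hp_le_one subset_rfl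
    _ ≤ ∑ g ∈ Icc (t + 1) ⌊δ * n⌋₊, ∑ S ∈ powersetCard g univ, (2 : ℝ) ^ (-(1 - η) * m) := by
        gcongr with g hg S hS
        exact hbad S (by rw [(mem_powersetCard.mp hS).2]; exact (mem_Icc.mp hg).1)
    _ = _ := by simp [sum_mul, card_powersetCard]

/-- Let `E_up` be the event that for every set `S` of left vertices with
`t+1 ≤ #S ≤ δn`, some right vertex `b_j` has `#(R_j ∩ S)` odd. If
`1/2 + (1-2p)^{t+1}/2 ≤ 2^{-(1-η)}`, then
`μ(E_up^c) ≤ (Σ_{g=t+1}^{⌊δn⌋} C(n,g)) · 2^{-(1-η)m}`. -/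
theorem E_up_complement_prob (m n t : ℕ) (hm : 0 < m) (hn : 0 < n)
    (p δ η : ℝ) (hp0 : 0 < p) (hp1 : p < 1 / 2)
    (hδ0 : 0 < δ) (hδ1 : δ < 1 / 2) (hη0 : 0 < η) (hη1 : η < 1 / 2)
    (ht1 : 1 ≤ t) (ht2 : (t : ℝ) + 1 ≤ δ * n)
    (hodd : 1 / 2 + (1 - 2 * p) ^ (t + 1) / 2 ≤ (2 : ℝ) ^ (-(1 - η))) :
    matProb m n p
        {X | ∀ S : Finset (Fin n), t + 1 ≤ S.card → (S.card : ℝ) ≤ δ * n →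
          ∃ j : Fin m, Odd ((rightNbrs X j) ∩ S).card}ᶜ
      ≤ (∑ g ∈ Finset.Icc (t + 1) ⌊δ * n⌋₊, (n.choose g : ℝ)) *
          (2 : ℝ) ^ (-(1 - η) * m) :=
  E_up_complement_prob_general m n t p δ η hp0 hp1 hodd
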